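/- With 𝒮ᵢ, ℛᵢ, 𝒯ᵢ the automorphisms of the pair (Fₙ, Mₙ) defined above, for 1 ≤ i ≤ n−1 the relation 𝒯_{i+1} ∘ 𝒮ᵢ = ℛᵢ ∘ 𝒮ᵢ⁻¹ ∘ ℛᵢ ∘ 𝒯ᵢ holds. -/

import Mathlib

/-- The free group `Fₙ` on generators `x₀, …, x_{n-1}` (0-based indexing). -/
abbrev FG (n : ℕ) := FreeGroup (Fin n)
/-- The group ring `ℤ[Fₙ]`. -/
abbrev GR (n : ℕ) := MonoidAlgebra ℤ (FG n)
/-- The free `ℤ[Fₙ]`-module `Mₙ` on `K₀, …, K_{n-1}`. -/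
abbrev M (n : ℕ) := Fin n →₀ GR n

/-- The generator `xᵢ`. -/
def X {n : ℕ} (i : Fin n) : FG n := FreeGroup.of i
/-- The module generator `Kᵢ`. -/
noncomputable def K {n : ℕ} (i : Fin n) : M n := Finsupp.single i 1

/-- The action `g ▷ m` of `Fₙ` on `Mₙ`, via the `ℤ[Fₙ]`-module structure. -/
noncomputable def act {n : ℕ} (g : FG n) (m : M n) : M n :=
  (MonoidAlgebra.of ℤ (FG n) g) • m

def fin0 (n i : ℕ) (h : i + 1 < n) : Fin n := ⟨i, Nat.lt_of_succ_lt h⟩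
def fin1 (n i : ℕ) (h : i + 1 < n) : Fin n := ⟨i + 1, h⟩

/-- The additive endomorphism of `Mₙ`, semilinear over the group endomorphism `f1`
(i.e. `m ↦ g ▷ m` goes to `m ↦ f1 g ▷ m`), determined by the images `t i` of the
generators `K i`. -/
noncomputable def lift2 {n : ℕ} (f1 : FG n →* FG n) (t : Fin n → M n) : M n →+ M n :=
  Finsupp.liftAddHom fun i =>
    { toFun := fun r => (MonoidAlgebra.mapDomainRingHom ℤ f1 r) • t i
      map_zero' := by simp
      map_add' := by intro a b; simp only [map_add, add_smul] }

/-- First component of the lifted Artin automorphism `𝒮ᵢ`. -/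
def S1 (n i : ℕ) (h : i + 1 < n) : FG n →* FG n :=
  FreeGroup.lift fun j =>
    if (j : ℕ) = i then X (fin1 n i h)
    else if (j : ℕ) = i + 1 then (X (fin1 n i h))⁻¹ * X (fin0 n i h) * X (fin1 n i h)
    else X j

/-- Second component of the lifted Artin automorphism `𝒮ᵢ`:
`Kᵢ ↦ Kᵢ + K_{i+1} − x_{i+1}⁻¹ ▷ Kᵢ`, `K_{i+1} ↦ x_{i+1}⁻¹ ▷ Kᵢ`, fixing other `Kⱼ`,
extended semilinearly over `𝒮ᵢ¹`. -/
noncomputable def S2 (n i : ℕ) (h : i + 1 < n) : M n →+ M n :=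
  lift2 (S1 n i h) fun j =>
    if (j : ℕ) = i then
      K (fin0 n i h) + K (fin1 n i h) - act (X (fin1 n i h))⁻¹ (K (fin0 n i h))
    else if (j : ℕ) = i + 1 then act (X (fin1 n i h))⁻¹ (K (fin0 n i h))
    else K j

/-- First component of the inverse `𝒮̄ᵢ`: `xᵢ ↦ xᵢ x_{i+1} xᵢ⁻¹`, `x_{i+1} ↦ xᵢ`. -/
def Sbar1 (n i : ℕ) (h : i + 1 < n) : FG n →* FG n :=
  FreeGroup.lift fun j =>
    if (j : ℕ) = i then X (fin0 n i h) * X (fin1 n i h) * (X (fin0 n i h))⁻¹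
    else if (j : ℕ) = i + 1 then X (fin0 n i h)
    else X j

/-- Second component of the inverse `𝒮̄ᵢ`: `Kᵢ ↦ xᵢ ▷ K_{i+1}`,
`K_{i+1} ↦ Kᵢ + K_{i+1} − xᵢ ▷ K_{i+1}`, fixing other `Kⱼ`. -/
noncomputable def Sbar2 (n i : ℕ) (h : i + 1 < n) : M n →+ M n :=
  lift2 (Sbar1 n i h) fun j =>
    if (j : ℕ) = i then act (X (fin0 n i h)) (K (fin1 n i h))
    else if (j : ℕ) = i + 1 then
      K (fin0 n i h) + K (fin1 n i h) - act (X (fin0 n i h)) (K (fin1 n i h))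
    else K j

/-- First component of the transposition automorphism `ℛᵢ`. -/
def R1 (n i : ℕ) (h : i + 1 < n) : FG n →* FG n :=
  FreeGroup.lift fun j =>
    if (j : ℕ) = i then X (fin1 n i h)
    else if (j : ℕ) = i + 1 then X (fin0 n i h)
    else X j

/-- Second component of `ℛᵢ`: swaps `Kᵢ` and `K_{i+1}`, fixing other `Kⱼ`. -/
noncomputable def R2 (n i : ℕ) (h : i + 1 < n) : M n →+ M n :=
  lift2 (R1 n i h) fun j =>
    if (j : ℕ) = i then K (fin1 n i h)
    else if (j : ℕ) = i + 1 then K (fin0 n i h)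
    else K j

/-- First component of the inversion automorphism `𝒯ᵢ`: `xᵢ ↦ xᵢ⁻¹`. -/
def T1 (n i : ℕ) (h : i < n) : FG n →* FG n :=
  FreeGroup.lift fun j => if (j : ℕ) = i then (X (⟨i, h⟩ : Fin n))⁻¹ else X j

/-- Second component of `𝒯ᵢ`: fixes each `Kⱼ`, extended semilinearly over `𝒯ᵢ¹`. -/
noncomputable def T2 (n i : ℕ) (h : i < n) : M n →+ M n :=
  lift2 (T1 n i h) fun j => K j

/-!
All the maps involved are `lift2`s, i.e. semilinear over their group components, and a
composite of `lift2`s is again one (`lift2_comp`). Both relations therefore reduce to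
equalities on the generators `xⱼ` and `Kⱼ`, which are direct computations; only `j = i, i + 1`
are moved.
-/

section

variable {n : ℕ}

theorem lift2_single (f : FG n →* FG n) (t : Fin n → M n) (j : Fin n) (r : GR n) :
    lift2 f t (Finsupp.single j r) = MonoidAlgebra.mapDomainRingHom ℤ f r • t j := by
  simp [lift2]

theorem lift2_K (f : FG n →* FG n) (t : Fin n → M n) (j : Fin n) : lift2 f t (K j) = t j := by
  simp [K, lift2_single]

theorem lift2_smul (f : FG n →* FG n) (t : Fin n → M n) (c : GR n) (m : M n) :
    lift2 f t (c • m) = MonoidAlgebra.mapDomainRingHom ℤ f c • lift2 f t m := by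
  induction m using Finsupp.induction with
  | zero => simp
  | single_add j r s _ _ ih =>
    rw [smul_add, map_add, map_add, smul_add, ih, Finsupp.smul_single, lift2_single,
      lift2_single, smul_eq_mul, map_mul, mul_smul]

theorem lift2_act (f : FG n →* FG n) (t : Fin n → M n) (g : FG n) (m : M n) :
    lift2 f t (act g m) = act (f g) (lift2 f t m) := by
  simp [act, lift2_smul, MonoidAlgebra.of_apply]

theorem lift2_comp (f g : FG n →* FG n) (s t : Fin n → M n) :
    (lift2 f s).comp (lift2 g t) = lift2 (f.comp g) fun j => lift2 f s (t j) := by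
  refine Finsupp.addHom_ext fun j r => ?_
  simp only [AddMonoidHom.comp_apply, lift2_single, lift2_smul,
    MonoidAlgebra.mapDomainRingHom_comp, RingHom.comp_apply]

end

theorem fin0_fin1_cases {n i : ℕ} (h : i + 1 < n) {P : Fin n → Prop} (h0 : P (fin0 n i h))
    (h1 : P (fin1 n i h)) (hother : ∀ j : Fin n, (j : ℕ) ≠ i → (j : ℕ) ≠ i + 1 → P j)
    (j : Fin n) : P j := by
  by_cases hj : (j : ℕ) = i
  · exact (Fin.ext hj : j = fin0 n i h) ▸ h0
  by_cases hj' : (j : ℕ) = i + 1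
  · exact (Fin.ext hj' : j = fin1 n i h) ▸ h1
  exact hother j hj hj'

theorem T1_comp_S1 (n i : ℕ) (h : i + 1 < n) :
    (T1 n (i + 1) h).comp (S1 n i h) =
      (R1 n i h).comp ((Sbar1 n i h).comp ((R1 n i h).comp (T1 n i (Nat.lt_of_succ_lt h)))) := by
  refine FreeGroup.ext_hom _ _ (fin0_fin1_cases h ?_ ?_ fun j hj hj' => ?_)
  · simp [S1, T1, R1, Sbar1, X, fin0, fin1]
  · simp [S1, T1, R1, Sbar1, X, fin0, fin1]
  · simp [S1, T1, R1, Sbar1, X, hj, hj']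

theorem T2_comp_S2 (n i : ℕ) (h : i + 1 < n) :
    (T2 n (i + 1) h).comp (S2 n i h) =
      (R2 n i h).comp ((Sbar2 n i h).comp ((R2 n i h).comp (T2 n i (Nat.lt_of_succ_lt h)))) := by
  simp only [T2, S2, R2, Sbar2, lift2_comp, T1_comp_S1]
  congr 1
  refine funext (fin0_fin1_cases h ?_ ?_ fun j hj hj' => ?_)
  · simp [lift2_K, lift2_act, T1, R1, Sbar1, X, fin0, fin1]
    abel
  · simp [lift2_K, lift2_act, T1, R1, Sbar1, X, fin0, fin1]
  · simp [lift2_K, hj, hj']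

/-- relation `𝒯_{i+1} ∘ 𝒮ᵢ = ℛᵢ ∘ 𝒮ᵢ⁻¹ ∘ ℛᵢ ∘ 𝒯ᵢ` for automorphisms of the
pair `(Fₙ, Mₙ)`, where `𝒮ᵢ⁻¹ = 𝒮̄ᵢ` is the explicit inverse of `𝒮ᵢ`. -/
theorem liftedArtin_TS_relation (n i : ℕ) (h : i + 1 < n) :
    (T1 n (i + 1) h).comp (S1 n i h) =
      (R1 n i h).comp ((Sbar1 n i h).comp ((R1 n i h).comp
        (T1 n i (Nat.lt_of_succ_lt h)))) ∧
    (T2 n (i + 1) h).comp (S2 n i h) =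
      (R2 n i h).comp ((Sbar2 n i h).comp ((R2 n i h).comp
        (T2 n i (Nat.lt_of_succ_lt h)))) :=
  ⟨T1_comp_S1 n i h, T2_comp_S2 n i h⟩
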